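/- Let G be a finite connected graph. If every block B of G is {a, b}-exit 2-copwin for every pair of vertices a, b of B, then G is {x}-exit 2-copwin for every vertex x of G. -/

import Mathlib

open SimpleGraph

variable {V : Type*}



/-- A move in the game: pass or slide along an edge. -/
def Step (G : SimpleGraph V) (a b : V) : Prop := a = b ∨ G.Adj a b

/-- A (full-information, positional) strategy for `k` cops. -/
structure CopStrategy (G : SimpleGraph V) (k : ℕ) where
  init : Fin k → V
  move : (Fin k → V) → V → (Fin k → V)
  valid : ∀ c r i, Step G (c i) (move c r i)

/-- A (full-information, positional) strategy for the robber. -/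
structure RobberStrategy (G : SimpleGraph V) (k : ℕ) where
  init : (Fin k → V) → V
  move : (Fin k → V) → V → V
  valid : ∀ c r, Step G r (move c r)

/-- State of the game after round `n`: cop positions and robber position.
Cops move first in each round. -/
def play {G : SimpleGraph V} {k : ℕ} (σ : CopStrategy G k) (τ : RobberStrategy G k) :
    ℕ → (Fin k → V) × V
  | 0 => (σ.init, τ.init σ.init)
  | n + 1 =>
    let p := play σ τ n
    let c' := σ.move p.1 p.2
    (c', τ.move c' p.2)

/-- At time `n`, a cop occupies the robber's vertex (either the robber stands on a cop,
or the cops' move at round `n+1` lands on him). -/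
def Caught {G : SimpleGraph V} {k : ℕ} (σ : CopStrategy G k) (τ : RobberStrategy G k)
    (n : ℕ) : Prop :=
  ∃ i, (play σ τ n).1 i = (play σ τ n).2 ∨ (play σ τ (n + 1)).1 i = (play σ τ n).2

/-- `G` is `k`-copwin: `k` cops have a winning strategy. -/
def CopWin (G : SimpleGraph V) (k : ℕ) : Prop :=
  ∃ σ : CopStrategy G k, ∀ τ : RobberStrategy G k, ∃ n, Caught σ τ n

/-- After the cops' move of round `m+1`, the robber stands alone on an exit vertex. -/
def Escaped {G : SimpleGraph V} {k : ℕ} (X : Set V) (σ : CopStrategy G k)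
    (τ : RobberStrategy G k) (m : ℕ) : Prop :=
  (play σ τ m).2 ∈ X ∧ ∀ i, (play σ τ (m + 1)).1 i ≠ (play σ τ m).2

/-- `G` is `X`-exit `k`-copwin: however the robber places the cops (subject to all exits
being occupied) and himself, the cops can catch the robber before he ever stands alone
on an exit vertex after a cops' move. -/
def ExitCopWin (G : SimpleGraph V) (k : ℕ) (X : Set V) : Prop :=
  ∀ c₀ : Fin k → V, X ⊆ Set.range c₀ →
    ∃ σ : CopStrategy G k, σ.init = c₀ ∧
      ∀ τ : RobberStrategy G k, ∃ n, Caught σ τ n ∧ ∀ m ≤ n, ¬ Escaped X σ τ m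



/-- `v` is a cut-vertex of the connected graph `G`: deleting it disconnects `G`. -/
def CutVertex (G : SimpleGraph V) (v : V) : Prop :=
  G.Connected ∧ ¬ ((⊤ : G.Subgraph).deleteVerts {v}).coe.Connected

/-- A set of vertices inducing a connected subgraph without a cut-vertex of its own
(for sets of at most two vertices only connectivity is required). -/
def IsBiconnSet (G : SimpleGraph V) (B : Set V) : Prop :=
  (G.induce B).Connected ∧ ∀ v ∈ B, B.ncard ≤ 2 ∨ (G.induce (B \ {v})).Connected

/-- A block of `G`: a maximal set of at least two vertices inducing a subgraph that is
2-connected or a bridge. -/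
def IsBlock (G : SimpleGraph V) (B : Set V) : Prop :=
  2 ≤ B.ncard ∧ IsBiconnSet G B ∧
    ∀ B' : Set V, B ⊆ B' → 2 ≤ B'.ncard → IsBiconnSet G B' → B' = B

/-- The interior of a block: its vertices that are not cut-vertices of `G`. -/
def BlockInterior (G : SimpleGraph V) (B : Set V) : Set V :=
  {v ∈ B | ¬ CutVertex G v}

/-- `G` is 2-connected (in the weak sense, including a single edge): it is connected
and has no cut-vertex. -/
def TwoConnected (G : SimpleGraph V) : Prop :=
  G.Connected ∧ ∀ v : V, ((⊤ : G.Subgraph).deleteVerts {v}).coe.Connected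

/-- `c'` is one step from `c` toward `y` along a shortest path (passing if `c = y`). -/
def StepToward (G : SimpleGraph V) (y c c' : V) : Prop :=
  (c' = c ∧ c = y) ∨ (G.Adj c c' ∧ G.dist y c' + 1 = G.dist y c)


namespace BP

noncomputable section
open Classical

/-- A positional robber law. -/
structure RobLaw (G : SimpleGraph V) where
  f : (Fin 2 → V) → V → V
  valid : ∀ c r, Step G r (f c r)

variable {G : SimpleGraph V}

/-- robber trajectory generated by a law reacting to a cop sequence -/
def robSeq (g : RobLaw G) (cs : ℕ → Fin 2 → V) (r0 : V) : ℕ → V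
  | 0 => r0
  | n+1 => g.f (cs (n+1)) (robSeq g cs r0 n)

def OKCops (G : SimpleGraph V) (cs : ℕ → Fin 2 → V) : Prop :=
  ∀ n i, Step G (cs n i) (cs (n+1) i)

def CaughtS (cs : ℕ → Fin 2 → V) (rs : ℕ → V) (n : ℕ) : Prop :=
  ∃ i, cs n i = rs n ∨ cs (n+1) i = rs n

def EscS (X : Set V) (cs : ℕ → Fin 2 → V) (rs : ℕ → V) (m : ℕ) : Prop :=
  rs m ∈ X ∧ ∀ i, cs (m+1) i ≠ rs m

def WinPlay (X : Set V) (cs : ℕ → Fin 2 → V) (rs : ℕ → V) : Prop :=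
  ∃ n, CaughtS cs rs n ∧ ∀ m ≤ n, ¬ EscS X cs rs m

/-- cops (starting at `c`, against robber law `g` with robber at `r`) can win -/
def Chase (X : Set V) (g : RobLaw G) (c : Fin 2 → V) (r : V) : Prop :=
  ∃ cs, cs 0 = c ∧ OKCops G cs ∧ WinPlay X cs (robSeq g cs r)

/-! ### The attractor (winning set) -/

variable (G) (X : Set V)

def WinN : ℕ → ((Fin 2 → V) × V) → Prop
  | 0, p => ∃ i, p.1 i = p.2
  | n+1, p => (∃ i, p.1 i = p.2) ∨
      ∃ c', (∀ i, Step G (p.1 i) (c' i)) ∧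
        ((∃ i, c' i = p.2) ∨ (p.2 ∉ X ∧ ∀ r', Step G p.2 r' → WinN n (c', r')))

def WinSt (p : (Fin 2 → V) × V) : Prop := ∃ n, WinN G X n p

lemma winN_succ : ∀ (n : ℕ) {p}, WinN G X n p → WinN G X (n+1) p := by
  intro n
  induction n with
  | zero => intro p hp; exact Or.inl hp
  | succ m ih =>
    intro p hp
    rcases hp with h0 | ⟨c', hv, hcap | ⟨hx, hall⟩⟩
    · exact Or.inl h0
    · exact Or.inr ⟨c', hv, Or.inl hcap⟩
    · exact Or.inr ⟨c', hv, Or.inr ⟨hx, fun r' hr' => ih (hall r' hr')⟩⟩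

lemma winN_mono {n m : ℕ} (h : n ≤ m) {p} (hp : WinN G X n p) : WinN G X m p := by
  induction m with
  | zero => simpa [Nat.le_zero.mp h] using hp
  | succ m ih =>
    rcases Nat.eq_or_lt_of_le h with rfl | h'
    · exact hp
    · exact winN_succ G X m (ih (Nat.lt_succ_iff.mp h'))

lemma winN_winSt {n p} (h : WinN G X n p) : WinSt G X p := ⟨n, h⟩

def rank (p : (Fin 2 → V) × V) : ℕ := if h : WinSt G X p then Nat.find h else 0

lemma rank_le_of_winN {n p} (h : WinN G X n p) : rank G X p ≤ n := by
  rw [rank, dif_pos (winN_winSt G X h)]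
  exact Nat.find_le h

lemma winN_rank {p} (h : WinSt G X p) : WinN G X (rank G X p) p := by
  rw [rank, dif_pos h]; exact Nat.find_spec h

lemma rank_pos {p} (h : WinSt G X p) (h0 : ¬ ∃ i, p.1 i = p.2) :
    ∃ m, rank G X p = m + 1 := by
  have hw := winN_rank G X h
  cases hq : rank G X p with
  | zero => rw [hq] at hw; exact absurd hw h0
  | succ m => exact ⟨m, rfl⟩

lemma exists_move {p} (h : WinSt G X p) (h0 : ¬ ∃ i, p.1 i = p.2) :
    ∃ c', (∀ i, Step G (p.1 i) (c' i)) ∧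
      ((∃ i, c' i = p.2) ∨
        (p.2 ∉ X ∧ ∀ r', Step G p.2 r' → WinN G X (rank G X p - 1) (c', r'))) := by
  obtain ⟨m, hm⟩ := rank_pos G X h h0
  have hw := winN_rank G X h
  rw [hm] at hw
  rcases hw with hcap | ⟨c', hv, hrest⟩
  · exact absurd hcap h0
  · exact ⟨c', hv, by rw [hm]; simpa using hrest⟩

def greedy (p : (Fin 2 → V) × V) : Fin 2 → V :=
  if h : WinSt G X p ∧ ¬ ∃ i, p.1 i = p.2 then choose (exists_move G X h.1 h.2) else p.1

lemma greedy_valid (p : (Fin 2 → V) × V) : ∀ i, Step G (p.1 i) (greedy G X p i) := by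
  rw [greedy]
  split
  next h => exact (choose_spec (exists_move G X h.1 h.2)).1
  next => exact fun i => Or.inl rfl

lemma greedy_spec {p} (h : WinSt G X p) (h0 : ¬ ∃ i, p.1 i = p.2) :
    (∃ i, greedy G X p i = p.2) ∨
      (p.2 ∉ X ∧ ∀ r', Step G p.2 r' →
        WinN G X (rank G X p - 1) (greedy G X p, r')) := by
  rw [greedy, dif_pos ⟨h, h0⟩]
  exact (choose_spec (exists_move G X h h0)).2

lemma greedy_of_cap {p} (h0 : ∃ i, p.1 i = p.2) : greedy G X p = p.1 := by
  rw [greedy, dif_neg]; tauto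

/-- The greedy strategy wins against every (even history-dependent) robber run,
starting from any state in the winning set. -/
theorem greedy_wins : ∀ (k : ℕ) (p : (Fin 2 → V) × V), WinSt G X p → rank G X p ≤ k →
    ∀ (cs : ℕ → Fin 2 → V) (rs : ℕ → V), cs 0 = p.1 → rs 0 = p.2 →
    (∀ n, cs (n+1) = greedy G X (cs n, rs n)) →
    (∀ n, Step G (rs n) (rs (n+1))) → WinPlay X cs rs := by
  intro k
  induction k with
  | zero =>
    intro p hp hr cs rs h0 hr0 hg hrv
    -- rank 0: capture now
    have hw := winN_rank G X hp
    rw [Nat.le_zero.mp hr] at hw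
    obtain ⟨i, hi⟩ := hw
    refine ⟨0, ⟨i, Or.inl (by rw [h0, hr0]; exact hi)⟩, ?_⟩
    intro m hm
    interval_cases m
    intro ⟨hX, hmiss⟩
    have : cs 1 = cs 0 := by
      rw [hg 0, h0, hr0, greedy_of_cap G X ⟨i, hi⟩]
    exact hmiss i (by rw [this, h0, hr0]; exact hi)
  | succ k ih =>
    intro p hp hr cs rs h0 hr0 hg hrv
    by_cases h0cap : ∃ i, p.1 i = p.2
    · obtain ⟨i, hi⟩ := h0cap
      refine ⟨0, ⟨i, Or.inl (by rw [h0, hr0]; exact hi)⟩, ?_⟩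
      intro m hm
      interval_cases m
      intro ⟨hX, hmiss⟩
      have : cs 1 = cs 0 := by rw [hg 0, h0, hr0, greedy_of_cap G X ⟨i, hi⟩]
      exact hmiss i (by rw [this, h0, hr0]; exact hi)
    · have hcs1 : cs 1 = greedy G X p := by rw [hg 0, h0, hr0]
      rcases greedy_spec G X hp h0cap with ⟨i, hi⟩ | ⟨hXp, hall⟩
      · -- capture by the move
        refine ⟨0, ⟨i, Or.inr (by rw [hcs1, hr0]; exact hi)⟩, ?_⟩
        intro m hm
        interval_cases m
        intro ⟨hX, hmiss⟩
        exact hmiss i (by rw [hcs1, hr0]; exact hi)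
      · -- recurse at the next state
        have hstep1 : Step G p.2 (rs 1) := by rw [← hr0]; exact hrv 0
        have hnext : WinN G X (rank G X p - 1) (cs 1, rs 1) := by
          rw [hcs1]; exact hall (rs 1) hstep1
        have hst : WinSt G X (cs 1, rs 1) := winN_winSt G X hnext
        have hrk : rank G X (cs 1, rs 1) ≤ k := by
          have h1 := rank_le_of_winN G X hnext
          omega
        have hrec := ih (cs 1, rs 1) hst hrk (fun n => cs (n+1)) (fun n => rs (n+1))
          rfl rfl (fun n => hg (n+1)) (fun n => hrv (n+1))
        obtain ⟨n, hc, hsafe⟩ := hrec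
        refine ⟨n+1, hc, ?_⟩
        intro m hm
        cases m with
        | zero =>
          intro ⟨hX, _⟩
          rw [hr0] at hX; exact hXp hX
        | succ m => exact hsafe m (by omega)

/-- The positional surviving law. -/
def surviveF (c' : Fin 2 → V) (r : V) : V :=
  if h : ∃ r', Step G r r' ∧ ¬ WinSt G X (c', r') then choose h else r

lemma surviveF_valid (c' : Fin 2 → V) (r : V) : Step G r (surviveF G X c' r) := by
  rw [surviveF]
  split
  next h => exact (choose_spec h).1
  next => exact Or.inl rfl

lemma surviveF_spec {c' : Fin 2 → V} {r : V}
    (h : ∃ r', Step G r r' ∧ ¬ WinSt G X (c', r')) :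
    ¬ WinSt G X (c', surviveF G X c' r) := by
  rw [surviveF, dif_pos h]
  exact (choose_spec h).2

def escapeLaw : RobLaw G := ⟨surviveF G X, surviveF_valid G X⟩

/-- If a state is not in the winning set, the positional law `escapeLaw` survives
against every cop sequence. -/
theorem escape_law (p : (Fin 2 → V) × V) [Fintype V] (hp : ¬ WinSt G X p) :
    ∀ cs, cs 0 = p.1 → OKCops G cs →
      ¬ WinPlay X cs (robSeq (escapeLaw G X) cs p.2) := by
  have hnN : ∀ q, ¬ WinSt G X q → ∀ n, ¬ WinN G X n q :=
    fun q hq n hn => hq ⟨n, hn⟩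
  have key : ∀ q, ¬ WinSt G X q → (¬ ∃ i, q.1 i = q.2) ∧
      ∀ c', (∀ i, Step G (q.1 i) (c' i)) → (¬ ∃ i, c' i = q.2) ∧
        (q.2 ∈ X ∨ ∃ r', Step G q.2 r' ∧ ¬ WinSt G X (c', r')) := by
    intro q hq
    refine ⟨hnN q hq 0, ?_⟩
    intro c' hc'
    constructor
    · intro hcap
      exact hnN q hq 1 (Or.inr ⟨c', hc', Or.inl hcap⟩)
    · by_cases hx : q.2 ∈ X
      · exact Or.inl hx
      refine Or.inr ?_
      by_contra hno
      push_neg at hno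
      have hfin : ∀ r', Step G q.2 r' → WinN G X
          (Finset.univ.sup (fun r' : V => rank G X (c', r'))) (c', r') := by
        intro r' hr'
        have hw : WinSt G X (c', r') := hno r' hr'
        exact winN_mono G X (Finset.le_sup (Finset.mem_univ r')) (winN_rank G X hw)
      exact hnN q hq (Finset.univ.sup (fun r' : V => rank G X (c', r')) + 1)
        (Or.inr ⟨c', hc', Or.inr ⟨hx, hfin⟩⟩)
  intro cs h0 hOK
  set rs := robSeq (escapeLaw G X) cs p.2 with hrs
  have aux : ∀ n, (∀ m, m < n → ¬ EscS X cs rs m) → ¬ WinSt G X (cs n, rs n) := by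
    intro n
    induction n with
    | zero =>
      intro _
      have : rs 0 = p.2 := rfl
      rw [h0, this]
      exact hp
    | succ n ih =>
      intro hsafe
      have hn := ih (fun m hm => hsafe m (Nat.lt_succ_of_lt hm))
      have hk := (key _ hn).2 (cs (n+1)) (hOK n)
      rcases hk.2 with hx | hex
      · exfalso
        apply hsafe n (Nat.lt_succ_self n)
        refine ⟨hx, ?_⟩
        intro i hi
        exact hk.1 ⟨i, hi⟩
      · have : rs (n+1) = surviveF G X (cs (n+1)) (rs n) := rfl
        rw [this]
        exact surviveF_spec G X hex
  rintro ⟨n, ⟨i, hcap⟩, hsafe⟩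
  have hn : ¬ WinSt G X (cs n, rs n) := aux n (fun m hm => hsafe m (le_of_lt hm))
  have hk := key _ hn
  rcases hcap with hcap | hcap
  · exact hk.1 ⟨i, hcap⟩
  · exact (hk.2 (cs (n+1)) (hOK n)).1 ⟨i, hcap⟩


/-! ### Translation between strategy plays and sequences -/

section translate
variable {G : SimpleGraph V}

lemma play_fst_zero (σ : CopStrategy G 2) (τ : RobberStrategy G 2) :
    (play σ τ 0).1 = σ.init := rfl

lemma play_okCops (σ : CopStrategy G 2) (τ : RobberStrategy G 2) :
    OKCops G (fun n => (play σ τ n).1) := by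
  intro n i
  exact σ.valid (play σ τ n).1 (play σ τ n).2 i

lemma play_snd_eq_robSeq (σ : CopStrategy G 2) (τ : RobberStrategy G 2) :
    ∀ n, (play σ τ n).2 =
      robSeq ⟨τ.move, τ.valid⟩ (fun k => (play σ τ k).1) (τ.init σ.init) n := by
  intro n
  induction n with
  | zero => rfl
  | succ n ih =>
    show τ.move (play σ τ (n+1)).1 (play σ τ n).2 = _
    rw [ih]
    rfl

lemma winPlay_of_strategy {X : Set V} (σ : CopStrategy G 2) (τ : RobberStrategy G 2)
    (h : ∃ n, Caught σ τ n ∧ ∀ m ≤ n, ¬ Escaped X σ τ m) :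
    WinPlay X (fun n => (play σ τ n).1) (fun n => (play σ τ n).2) := h

end translate

/-! ### The chase toolkit -/

section chase
variable {G : SimpleGraph V} {X : Set V} {g : RobLaw G}

lemma robSeq_shift (g : RobLaw G) (cs : ℕ → Fin 2 → V) (r : V) :
    ∀ n, robSeq g cs r (n+1) = robSeq g (fun k => cs (k+1)) (robSeq g cs r 1) n := by
  intro n
  induction n with
  | zero => rfl
  | succ n ih =>
    show g.f (cs (n+2)) (robSeq g cs r (n+1)) = _
    rw [ih]
    rfl

lemma chase_capture {c : Fin 2 → V} {r : V} (h : ∃ i, c i = r) : Chase X g c r := by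
  refine ⟨fun _ => c, rfl, fun n i => Or.inl rfl, 0, ?_, ?_⟩
  · obtain ⟨i, hi⟩ := h
    exact ⟨i, Or.inl hi⟩
  · intro m hm
    interval_cases m
    rintro ⟨_, hmiss⟩
    obtain ⟨i, hi⟩ := h
    exact hmiss i hi

lemma chase_step {c c' : Fin 2 → V} {r : V}
    (hv : ∀ i, Step G (c i) (c' i))
    (hsafe : r ∈ X → ∃ i, c' i = r)
    (hnext : Chase X g c' (g.f c' r)) : Chase X g c r := by
  obtain ⟨cs', h0', hOK', n, hc', hsafe'⟩ := hnext
  set cs : ℕ → Fin 2 → V := fun k => Nat.rec c (fun k _ => cs' k) k with hcs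
  have hcs0 : cs 0 = c := rfl
  have hcsS : ∀ k, cs (k+1) = cs' k := fun k => rfl
  have hrs : ∀ k, robSeq g cs r (k+1) = robSeq g cs' (g.f c' r) k := by
    intro k
    induction k with
    | zero => show g.f (cs' 0) r = g.f c' r; rw [h0']
    | succ k ih =>
      show g.f (cs (k+2)) (robSeq g cs r (k+1)) = _
      rw [ih]
      rfl
  refine ⟨cs, rfl, ?_, n+1, ?_, ?_⟩
  · intro k i
    cases k with
    | zero => rw [hcs0, hcsS, h0']; exact hv i
    | succ k => rw [hcsS, hcsS]; exact hOK' k i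
  · obtain ⟨i, hi⟩ := hc'
    refine ⟨i, ?_⟩
    rw [hcsS, hcsS, hrs]
    exact hi
  · intro m hm
    cases m with
    | zero =>
      rintro ⟨hX, hmiss⟩
      obtain ⟨i, hi⟩ := hsafe hX
      exact hmiss i (by rw [hcsS, h0']; exact hi)
    | succ m =>
      rintro ⟨hX, hmiss⟩
      refine hsafe' m (by omega) ⟨by rwa [← hrs], ?_⟩
      intro i hi
      exact hmiss i (by rw [hcsS, hrs]; exact hi)

lemma chase_prefix : ∀ (N : ℕ) (cs : ℕ → Fin 2 → V) (r : V), OKCops G cs →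
    (∀ m, m < N → robSeq g cs r m ∈ X → ∃ i, cs (m+1) i = robSeq g cs r m) →
    Chase X g (cs N) (robSeq g cs r N) → Chase X g (cs 0) r := by
  intro N
  induction N with
  | zero => intro cs r _ _ h; exact h
  | succ N ih =>
    intro cs r hOK hsafe hend
    refine chase_step (c' := cs 1) (hOK 0) (hsafe 0 (Nat.succ_pos N)) ?_
    have h1 : g.f (cs 1) r = robSeq g cs r 1 := rfl
    rw [h1]
    have := ih (fun k => cs (k+1)) (robSeq g cs r 1)
      (fun n i => hOK (n+1) i)
      (fun m hm => by
        rw [← robSeq_shift]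
        exact hsafe (m+1) (by omega))
      (by rw [← robSeq_shift]; exact hend)
    exact this

def oth (j : Fin 2) : Fin 2 := 1 - j

lemma fin2_cases (i j : Fin 2) : i = j ∨ i = oth j := by
  revert i j; decide

lemma oth_ne (j : Fin 2) : oth j ≠ j := by revert j; decide

def two (j : Fin 2) (a b : V) : Fin 2 → V := fun i => if i = j then a else b

@[simp] lemma two_same (j : Fin 2) (a b : V) : two j a b j = a := if_pos rfl

@[simp] lemma two_oth (j : Fin 2) (a b : V) : two j a b (oth j) = b := if_neg (oth_ne j)

lemma eq_two (j : Fin 2) (c : Fin 2 → V) (hj : c j = a) (ho : c (oth j) = b) :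
    c = two j a b := by
  funext i
  rcases fin2_cases i j with rfl | rfl
  · rw [hj]; simp [two]
  · rw [ho]; simp [two, oth_ne]

lemma chase_march (j : Fin 2) (u : V) (Ter : Set V)
    (hterr : ∀ a ∈ Ter, a ≠ u → ∀ b, G.Adj a b → b ∈ Ter)
    (hXT : X ∩ Ter ⊆ {u}) :
    ∀ {s t : V} (_ : G.Walk s t) (c : Fin 2 → V), c j = u → c (oth j) = s →
    ∀ r ∈ Ter, (∀ r' ∈ Ter, Chase X g (two j u t) r') → Chase X g c r := by
  intro s t w
  induction w with
  | nil =>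
    intro c hj ho r hr hend
    rw [eq_two j c hj ho]
    exact hend r hr
  | @cons a b t h p ih =>
    intro c hj ho r hr hend
    by_cases hru : r = u
    · exact chase_capture ⟨j, by rw [hj, hru]⟩
    · refine chase_step (c' := two j u b) ?_ ?_ ?_
      · intro i
        rcases fin2_cases i j with rfl | rfl
        · rw [hj, two_same]; exact Or.inl rfl
        · rw [ho, two_oth]; exact Or.inr h
      · intro hX
        exact absurd (hXT ⟨hX, hr⟩) hru
      · have hr' : g.f (two j u b) r ∈ Ter := by
          rcases g.valid (two j u b) r with he | ha
          · rwa [← he]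
          · exact hterr r hr hru _ ha
        exact ih (two j u b) (two_same j u b) (two_oth j u b) _ hr' hend
end chase

/-! ### Reachability within a vertex set -/

section reach
variable {G : SimpleGraph V}

def ReachIn (G : SimpleGraph V) (S : Set V) (u v : V) : Prop :=
  ∃ w : G.Walk u v, ∀ a ∈ w.support, a ∈ S

lemma ReachIn.mem_left {S : Set V} {u v : V} (h : ReachIn G S u v) : u ∈ S := by
  obtain ⟨w, hw⟩ := h
  exact hw u w.start_mem_support

lemma ReachIn.mem_right {S : Set V} {u v : V} (h : ReachIn G S u v) : v ∈ S := by
  obtain ⟨w, hw⟩ := h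
  exact hw v w.end_mem_support

lemma ReachIn.refl {S : Set V} {u : V} (h : u ∈ S) : ReachIn G S u u :=
  ⟨SimpleGraph.Walk.nil, by simpa⟩

lemma ReachIn.symm {S : Set V} {u v : V} (h : ReachIn G S u v) : ReachIn G S v u := by
  obtain ⟨w, hw⟩ := h
  exact ⟨w.reverse, fun a ha => hw a (by
    rw [SimpleGraph.Walk.support_reverse] at ha
    exact List.mem_reverse.mp ha)⟩

lemma ReachIn.trans {S : Set V} {u v x : V} (h : ReachIn G S u v) (h' : ReachIn G S v x) :
    ReachIn G S u x := by
  obtain ⟨w, hw⟩ := h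
  obtain ⟨w', hw'⟩ := h'
  refine ⟨w.append w', fun a ha => ?_⟩
  rcases (SimpleGraph.Walk.mem_support_append_iff _ _).mp ha with h1 | h1
  · exact hw a h1
  · exact hw' a h1

lemma ReachIn.mono {S T : Set V} (hST : S ⊆ T) {u v : V} (h : ReachIn G S u v) :
    ReachIn G T u v := by
  obtain ⟨w, hw⟩ := h
  exact ⟨w, fun a ha => hST (hw a ha)⟩

lemma ReachIn.adj {S : Set V} {u v : V} (hu : u ∈ S) (hv : v ∈ S) (h : G.Adj u v) :
    ReachIn G S u v :=
  ⟨SimpleGraph.Walk.cons h SimpleGraph.Walk.nil, by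
    intro a ha
    simp only [SimpleGraph.Walk.support_cons, SimpleGraph.Walk.support_nil,
      List.mem_cons, List.mem_singleton] at ha
    rcases ha with rfl | rfl | h'
    · exact hu
    · exact hv
    · exact absurd h' List.not_mem_nil⟩

def ConnIn (G : SimpleGraph V) (S : Set V) : Prop := ∀ u ∈ S, ∀ v ∈ S, ReachIn G S u v

lemma connIn_of_subsingleton {S : Set V} (h : S.Subsingleton) : ConnIn G S :=
  fun u hu v hv => (h hu hv) ▸ ReachIn.refl hu

lemma reachable_induce_of_reachIn {S : Set V} {u v : V} (hu : u ∈ S) (hv : v ∈ S)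
    (h : ReachIn G S u v) : (G.induce S).Reachable ⟨u, hu⟩ ⟨v, hv⟩ := by
  obtain ⟨w, hw⟩ := h
  induction w with
  | nil => rfl
  | @cons a b t hab p ih =>
    have hb : b ∈ S := hw b (by simp [SimpleGraph.Walk.support_cons])
    have h1 : (G.induce S).Adj ⟨a, hu⟩ ⟨b, hb⟩ := hab
    exact h1.reachable.trans (ih hb hv (fun x hx => hw x (by
      simp only [SimpleGraph.Walk.support_cons, List.mem_cons]; exact Or.inr hx)))

lemma induce_connected_of_connIn {S : Set V} (hne : S.Nonempty) (h : ConnIn G S) :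
    (G.induce S).Connected := by
  rw [SimpleGraph.connected_iff]
  refine ⟨fun x y => ?_, ⟨⟨hne.choose, hne.choose_spec⟩⟩⟩
  obtain ⟨u, hu⟩ := x
  obtain ⟨v, hv⟩ := y
  exact reachable_induce_of_reachIn hu hv (h u hu v hv)

lemma connIn_of_induce_connected {S : Set V} (h : (G.induce S).Connected) : ConnIn G S := by
  intro u hu v hv
  obtain ⟨p⟩ := h.preconnected ⟨u, hu⟩ ⟨v, hv⟩
  refine ⟨p.map (SimpleGraph.Embedding.induce S).toHom, ?_⟩
  intro a ha
  replace ha : a ∈ (p.map (SimpleGraph.Embedding.induce S).toHom).support := ha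
  rw [SimpleGraph.Walk.support_map, List.mem_map] at ha
  obtain ⟨⟨x, hx⟩, _, rfl⟩ := ha
  exact hx

lemma connIn_univ_of_connected (h : G.Connected) : ConnIn G (Set.univ : Set V) := by
  intro u _ v _
  obtain ⟨p⟩ := h.preconnected u v
  exact ⟨p, fun a _ => trivial⟩

lemma connIn_union {A B : Set V} (hA : ConnIn G A) (hB : ConnIn G B)
    (hx : (A ∩ B).Nonempty) : ConnIn G (A ∪ B) := by
  obtain ⟨z, hzA, hzB⟩ := hx
  have key : ∀ u ∈ A ∪ B, ReachIn G (A ∪ B) u z := by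
    intro u hu
    rcases hu with hu | hu
    · exact (hA u hu z hzA).mono Set.subset_union_left
    · exact (hB u hu z hzB).mono Set.subset_union_right
  intro u hu v hv
  exact (key u hu).trans (key v hv).symm

lemma reachIn_support_end {s t : V} (p : G.Walk s t) :
    ∀ c ∈ p.support, ReachIn G {x | x ∈ p.support} c t := by
  induction p with
  | nil =>
    intro c hc
    simp only [SimpleGraph.Walk.support_nil, List.mem_singleton] at hc
    subst hc
    exact ReachIn.refl (by simp)
  | @cons a b t hab p ih =>
    intro c hc
    rw [SimpleGraph.Walk.support_cons, List.mem_cons] at hc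
    rcases hc with rfl | hc
    · exact ⟨SimpleGraph.Walk.cons hab p, fun x hx => hx⟩
    · exact (ih c hc).mono (by
        intro x hx
        simp only [Set.mem_setOf_eq, SimpleGraph.Walk.support_cons, List.mem_cons]
        exact Or.inr hx)

lemma reachIn_support_start {s t : V} (p : G.Walk s t) :
    ∀ c ∈ p.support, ReachIn G {x | x ∈ p.support} s c := by
  intro c hc
  have := reachIn_support_end p.reverse c (by
    rw [SimpleGraph.Walk.support_reverse]; exact List.mem_reverse.mpr hc)
  have hset : {x | x ∈ p.reverse.support} = {x | x ∈ p.support} := by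
    ext x
    simp [SimpleGraph.Walk.support_reverse]
  rw [hset] at this
  exact this.symm

lemma path_reach_avoid {s t : V} (p : G.Walk s t) (hp : p.support.Nodup) (w : V) :
    ∀ a ∈ p.support, a ≠ w →
      ReachIn G ({x | x ∈ p.support} \ {w}) a s ∨
      ReachIn G ({x | x ∈ p.support} \ {w}) a t := by
  induction p with
  | nil =>
    intro a ha haw
    simp only [SimpleGraph.Walk.support_nil, List.mem_singleton] at ha
    subst ha
    exact Or.inl (ReachIn.refl ⟨by simp, haw⟩)
  | @cons u b t hub p ih =>
    intro a ha haw
    rw [SimpleGraph.Walk.support_cons, List.mem_cons] at ha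
    rw [SimpleGraph.Walk.support_cons, List.nodup_cons] at hp
    have hsub : ({x | x ∈ p.support} \ {w}) ⊆ ({x | x ∈ (SimpleGraph.Walk.cons hub p).support} \ {w}) := by
      intro x hx
      refine ⟨?_, hx.2⟩
      simp only [Set.mem_setOf_eq, SimpleGraph.Walk.support_cons, List.mem_cons]
      exact Or.inr hx.1
    rcases ha with rfl | ha
    · exact Or.inl (ReachIn.refl ⟨by simp [SimpleGraph.Walk.support_cons], haw⟩)
    · by_cases hw : w = u
      · subst hw
        refine Or.inr ((reachIn_support_end p a ha).mono ?_)
        intro x hx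
        refine ⟨?_, ?_⟩
        · simp only [Set.mem_setOf_eq, SimpleGraph.Walk.support_cons, List.mem_cons]
          exact Or.inr hx
        · intro hxw
          rw [Set.mem_singleton_iff] at hxw
          subst hxw
          exact hp.1 hx
      · rcases ih hp.2 a ha haw with hleft | hright
        · refine Or.inl ?_
          have hbmem : b ∈ ({x | x ∈ (SimpleGraph.Walk.cons hub p).support} \ {w}) :=
            hsub hleft.mem_right
          have humem : u ∈ ({x | x ∈ (SimpleGraph.Walk.cons hub p).support} \ {w}) := by
            refine ⟨by simp [SimpleGraph.Walk.support_cons], ?_⟩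
            intro h'
            rw [Set.mem_singleton_iff] at h'
            exact hw h'.symm
          exact (hleft.mono hsub).trans (ReachIn.adj hbmem humem hub.symm)
        · exact Or.inr (hright.mono hsub)
end reach

/-! ### Block theory -/

section blocks
variable {G : SimpleGraph V} [Fintype V]

lemma blockConnIn {B : Set V} (hB : IsBiconnSet G B) : ConnIn G B :=
  connIn_of_induce_connected hB.1

lemma connIn_support {s t : V} (p : G.Walk s t) : ConnIn G {x | x ∈ p.support} := by
  intro a ha b hb
  exact (reachIn_support_start p a ha).symm.trans (reachIn_support_start p b hb)

lemma biconn_del_conn {B : Set V} (hB : IsBiconnSet G B) (hcard : 2 ≤ B.ncard)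
    (w : V) : ConnIn G (B \ {w}) := by
  by_cases hwB : w ∈ B
  · rcases hB.2 w hwB with h2 | hconn
    · have h2' : B.ncard = 2 := le_antisymm h2 hcard
      obtain ⟨p, q, hpq, rfl⟩ := Set.ncard_eq_two.mp h2'
      apply connIn_of_subsingleton
      rintro a ⟨ha, haw⟩ b ⟨hb, hbw⟩
      simp only [Set.mem_insert_iff, Set.mem_singleton_iff] at ha hb
      simp only [Set.mem_singleton_iff] at haw hbw
      simp only [Set.mem_insert_iff, Set.mem_singleton_iff] at hwB
      rcases hwB with rfl | rfl
      · rcases ha with rfl | rfl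
        · exact absurd rfl haw
        · rcases hb with rfl | rfl
          · exact absurd rfl hbw
          · rfl
      · rcases ha with rfl | rfl
        · rcases hb with rfl | rfl
          · rfl
          · exact absurd rfl hbw
        · exact absurd rfl haw
    · exact connIn_of_induce_connected hconn
  · rw [Set.diff_singleton_eq_self hwB]
    exact blockConnIn hB

lemma pair_biconn {y u : V} (h : G.Adj y u) : IsBiconnSet G {y, u} := by
  constructor
  · apply induce_connected_of_connIn ⟨y, by simp⟩
    intro a ha b hb
    simp only [Set.mem_insert_iff, Set.mem_singleton_iff] at ha hb
    have hy : (y : V) ∈ ({y, u} : Set V) := by simp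
    have hu : (u : V) ∈ ({y, u} : Set V) := by simp
    rcases ha with rfl | rfl <;> rcases hb with rfl | rfl
    · exact ReachIn.refl hy
    · exact ReachIn.adj hy hu h
    · exact ReachIn.adj hu hy h.symm
    · exact ReachIn.refl hu
  · intro v _
    exact Or.inl (le_of_eq (Set.ncard_pair h.ne))

lemma exists_block {y u : V} (h : G.Adj y u) :
    ∃ B, IsBlock G B ∧ y ∈ B ∧ u ∈ B := by
  set C : Set (Set V) := {C | ({y, u} : Set V) ⊆ C ∧ 2 ≤ C.ncard ∧ IsBiconnSet G C}
    with hCdef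
  have hCne : C.Nonempty := ⟨{y, u}, subset_rfl, le_of_eq (Set.ncard_pair h.ne).symm,
    pair_biconn h⟩
  obtain ⟨B, hBC, hmax⟩ := Set.Finite.exists_maximalFor Set.ncard C (Set.toFinite C) hCne
  refine ⟨B, ⟨hBC.2.1, hBC.2.2, ?_⟩, hBC.1 (by simp), hBC.1 (by simp)⟩
  intro B' hsub hcard' hbic'
  have hB'C : B' ∈ C := ⟨hBC.1.trans hsub, hcard', hbic'⟩
  have hle : B.ncard ≤ B'.ncard := Set.ncard_le_ncard hsub (Set.toFinite B')
  exact (Set.eq_of_subset_of_ncard_le hsub (hmax hB'C hle)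
    (Set.toFinite B')).symm

lemma walk_attach {R B : Set V} : ∀ {v z : V} (p : G.Walk v z),
    (∀ a ∈ p.support, a ∈ R) → v ∉ B → z ∈ B →
    ∃ d b, ReachIn G (R \ B) v d ∧ G.Adj d b ∧ b ∈ B := by
  intro v z p
  induction p with
  | nil => intro h hvB hzB; exact absurd hzB hvB
  | @cons v w z hvw p ih =>
    intro h hvB hzB
    have hvR : v ∈ R := h v (SimpleGraph.Walk.start_mem_support _)
    have hwR : w ∈ R := h w (by simp [SimpleGraph.Walk.support_cons])
    by_cases hwB : w ∈ B
    · exact ⟨v, w, ReachIn.refl (S := R \ B) ⟨hvR, hvB⟩, hvw, hwB⟩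
    · obtain ⟨d, b, hr, ha, hb⟩ := ih (fun a ha => h a (by
        simp only [SimpleGraph.Walk.support_cons, List.mem_cons]; exact Or.inr ha)) hwB hzB
      exact ⟨d, b, (ReachIn.adj (S := R \ B) ⟨hvR, hvB⟩ ⟨hwR, hwB⟩ hvw).trans hr, ha, hb⟩

/-- The "ear" lemma: all attachments of a connected piece disjoint from a block `B`
are at one and the same vertex of `B`. -/
lemma attach_unique {B : Set V} (hB : IsBlock G B) {S : Set V}
    (hdisj : ∀ x ∈ S, x ∉ B) {d₁ d₂ b₁ b₂ : V}
    (hreach : ReachIn G S d₁ d₂) (h1 : G.Adj d₁ b₁) (h2 : G.Adj d₂ b₂)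
    (hb₁ : b₁ ∈ B) (hb₂ : b₂ ∈ B) : b₁ = b₂ := by
  by_contra hne
  obtain ⟨q, hq⟩ := hreach
  set W : G.Walk b₁ b₂ :=
    SimpleGraph.Walk.cons h1.symm (q.append (SimpleGraph.Walk.cons h2 SimpleGraph.Walk.nil))
    with hWdef
  set p : G.Walk b₁ b₂ := (W.toPath : G.Walk b₁ b₂) with hpdef
  have hppath : p.IsPath := W.toPath.2
  have hWsupp : ∀ a ∈ W.support, a = b₁ ∨ a = b₂ ∨ a ∈ S := by
    intro a ha
    rw [hWdef, SimpleGraph.Walk.support_cons, List.mem_cons] at ha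
    rcases ha with rfl | ha
    · exact Or.inl rfl
    · rw [SimpleGraph.Walk.mem_support_append_iff] at ha
      rcases ha with ha | ha
      · exact Or.inr (Or.inr (hq a ha))
      · simp only [SimpleGraph.Walk.support_cons, SimpleGraph.Walk.support_nil,
          List.mem_cons, List.mem_singleton] at ha
        rcases ha with rfl | rfl | hfalse
        · exact Or.inr (Or.inr (hq a q.end_mem_support))
        · exact Or.inr (Or.inl rfl)
        · exact absurd hfalse List.not_mem_nil
  have hWedge : ∀ e ∈ W.edges, ∃ x ∈ S, x ∈ e := by
    intro e he
    induction e using Sym2.ind with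
    | _ x y =>
    rw [hWdef, SimpleGraph.Walk.edges_cons, List.mem_cons] at he
    rcases he with heq | he
    · refine ⟨d₁, hq d₁ q.start_mem_support, ?_⟩
      rw [heq]
      simp
    · rw [SimpleGraph.Walk.edges_append, List.mem_append] at he
      rcases he with he | he
      · exact ⟨x, hq x (SimpleGraph.Walk.fst_mem_support_of_mem_edges q he), by simp⟩
      · simp only [SimpleGraph.Walk.edges_cons, SimpleGraph.Walk.edges_nil,
          List.mem_cons, List.not_mem_nil, or_false] at he
        refine ⟨d₂, hq d₂ q.end_mem_support, ?_⟩
        rw [he]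
        simp
  have hpsupp : ∀ a ∈ p.support, a = b₁ ∨ a = b₂ ∨ a ∈ S := by
    intro a ha
    exact hWsupp a (SimpleGraph.Walk.support_toPath_subset W ha)
  -- get an interior vertex of p, lying in S
  obtain ⟨v₁, hadj₁, p', hpeq⟩ := SimpleGraph.Walk.exists_eq_cons_of_ne hne p
  have hv₁S : v₁ ∈ S := by
    have hedge : s(b₁, v₁) ∈ p.edges := by
      rw [hpeq, SimpleGraph.Walk.edges_cons]
      exact List.mem_cons_self
    obtain ⟨x, hxS, hxe⟩ := hWedge _ (SimpleGraph.Walk.edges_toPath_subset W hedge)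
    rw [Sym2.mem_iff] at hxe
    rcases hxe with rfl | rfl
    · exact absurd hb₁ (hdisj x hxS)
    · exact hxS
  have hv₁p : v₁ ∈ p.support := by
    rw [hpeq]
    simp [SimpleGraph.Walk.support_cons]
  -- the enlarged set
  set B' : Set V := B ∪ {x | x ∈ p.support} with hB'def
  have hsubB : B ⊆ B' := Set.subset_union_left
  have hb₁' : b₁ ∈ B' := Or.inl hb₁
  have hconnB' : ConnIn G B' :=
    connIn_union (blockConnIn hB.2.1) (connIn_support p)
      ⟨b₁, hb₁, p.start_mem_support⟩
  have hcard' : 2 ≤ B'.ncard := hB.1.trans (Set.ncard_le_ncard hsubB (Set.toFinite B'))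
  have hbic' : IsBiconnSet G B' := by
    constructor
    · exact induce_connected_of_connIn ⟨b₁, hb₁'⟩ hconnB'
    · intro w _
      refine Or.inr ?_
      have hbstar : ∃ bs, bs ∈ B ∧ bs ≠ w := by
        by_cases h1w : b₁ = w
        · exact ⟨b₂, hb₂, fun h2w => hne (h1w.trans h2w.symm)⟩
        · exact ⟨b₁, hb₁, h1w⟩
      obtain ⟨bs, hbsB, hbsw⟩ := hbstar
      have hbs' : bs ∈ B' \ {w} := ⟨Or.inl hbsB, by simpa using hbsw⟩
      have hdelB : ConnIn G (B \ {w}) := biconn_del_conn hB.2.1 hB.1 w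
      have hBsub : (B \ {w}) ⊆ (B' \ {w}) := Set.diff_subset_diff_left hsubB
      have hub : ∀ a ∈ B' \ {w}, ReachIn G (B' \ {w}) a bs := by
        rintro a ⟨haB', haw⟩
        rw [Set.mem_singleton_iff] at haw
        rcases haB' with haB | hasupp
        · exact (hdelB a ⟨haB, haw⟩ bs ⟨hbsB, hbsw⟩).mono hBsub
        · have hsuppsub : ({x | x ∈ p.support} \ {w}) ⊆ (B' \ {w}) :=
            Set.diff_subset_diff_left Set.subset_union_right
          rcases path_reach_avoid p hppath.support_nodup w a hasupp haw with hr | hr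
          · have hb1w : b₁ ≠ w := by
              have := hr.mem_right
              simpa [Set.mem_singleton_iff] using this.2
            exact (hr.mono hsuppsub).trans
              ((hdelB b₁ ⟨hb₁, hb1w⟩ bs ⟨hbsB, hbsw⟩).mono hBsub)
          · have hb2w : b₂ ≠ w := by
              have := hr.mem_right
              simpa [Set.mem_singleton_iff] using this.2
            exact (hr.mono hsuppsub).trans
              ((hdelB b₂ ⟨hb₂, hb2w⟩ bs ⟨hbsB, hbsw⟩).mono hBsub)
      have hconn : ConnIn G (B' \ {w}) :=
        fun a ha b hb => (hub a ha).trans (hub b hb).symm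
      exact induce_connected_of_connIn ⟨bs, hbs'⟩ hconn
  have heq : B' = B := hB.2.2 B' hsubB hcard' hbic'
  have : v₁ ∈ B := heq ▸ (Or.inr hv₁p : v₁ ∈ B')
  exact hdisj v₁ hv₁S this

end blocks

/-! ### The pursuit -/

section pursuit
variable {G : SimpleGraph V} [Fintype V]

lemma reach_closed {D : Set V} {u : V}
    (hcl : ∀ a ∈ D, ∀ b, G.Adj a b → b ∈ D ∪ {u}) :
    ∀ {d zs : V} (p : G.Walk d zs), (∀ x ∈ p.support, x ≠ u) → d ∈ D → zs ∈ D := by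
  intro d zs p
  induction p with
  | nil => intro _ hd; exact hd
  | @cons a b t hab p ih =>
    intro hsup hd
    have hbne : b ≠ u := hsup b (by simp [SimpleGraph.Walk.support_cons])
    have hb : b ∈ D := by
      rcases hcl a hd b hab with h | h
      · exact h
      · exact absurd h hbne
    exact ih (fun x hx => hsup x (by
      simp only [SimpleGraph.Walk.support_cons, List.mem_cons]; exact Or.inr hx)) hb

lemma stepH_of_step {B : Set V} {x y : ↥B} (h : Step (G.induce B) x y) :
    Step G (x : V) (y : V) := by
  rcases h with rfl | h
  · exact Or.inl rfl
  · exact Or.inr h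

lemma two_const (j : Fin 2) (u : V) : two j u u = fun _ => u := by
  funext i
  simp [two]

theorem pursuit (hGc : G.Connected)
    (hblk : ∀ B : Set V, IsBlock G B → ∀ a b : B, ExitCopWin (G.induce B) 2 {a, b})
    (X : Set V) (g : RobLaw G) :
    ∀ (N : ℕ) (R : Set V) (y : V), R.ncard ≤ N →
    y ∈ R → ConnIn G R →
    (∀ u ∈ R, u ≠ y → ∀ w, G.Adj u w → w ∈ R) →
    X ∩ R ⊆ {y} →
    (∀ S, IsBlock G S → 2 ≤ (S ∩ R).ncard → S ⊆ R) →
    ∀ r₀ ∈ R, Chase X g (fun _ => y) r₀ := by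
  intro N
  induction N with
  | zero =>
    intro R y hcard hy _ _ _ _ r₀ _
    rw [Nat.le_zero] at hcard
    rw [Set.ncard_eq_zero (Set.toFinite R)] at hcard
    exact absurd (hcard ▸ hy) (Set.notMem_empty y)
  | succ N ih =>
    intro R y hcard hy hconn hterr hXR hbc r₀ hr₀
    by_cases hr0y : r₀ = y
    · exact chase_capture ⟨0, hr0y.symm⟩
    -- find an edge of R at y, and the block containing it
    obtain ⟨p, hp⟩ := hconn y hy r₀ hr₀
    obtain ⟨u₀, hadj, p', hpeq⟩ :=
      SimpleGraph.Walk.exists_eq_cons_of_ne (fun h => hr0y h.symm) p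
    have hu₀R : u₀ ∈ R := hp u₀ (by rw [hpeq]; simp [SimpleGraph.Walk.support_cons])
    obtain ⟨B, hBblk, hyB, hu₀B⟩ := exists_block hadj
    have hBR : B ⊆ R := by
      apply hbc B hBblk
      have hpairsub : ({y, u₀} : Set V) ⊆ B ∩ R :=
        Set.pair_subset ⟨hyB, hy⟩ ⟨hu₀B, hu₀R⟩
      calc 2 = ({y, u₀} : Set V).ncard := (Set.ncard_pair hadj.ne).symm
        _ ≤ (B ∩ R).ncard := Set.ncard_le_ncard hpairsub (Set.toFinite _)
    haveI : Fintype ↥B := (Set.toFinite B).fintype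
    set H : SimpleGraph ↥B := G.induce B with hHdef
    set yhat : ↥B := ⟨y, hyB⟩ with hyhatdef
    set X' : Set ↥B := {yhat} with hX'def
    -- attachments
    have hattx : ∀ v, v ∈ R → v ∉ B →
        ∃ b, b ∈ B ∧ ∃ d, ReachIn G (R \ B) v d ∧ G.Adj d b := by
      intro v hv hvB
      obtain ⟨q, hq⟩ := hconn v hv y hy
      obtain ⟨d, b, h1, h2, h3⟩ := walk_attach q hq hvB hyB
      exact ⟨b, h3, d, h1, h2⟩
    set att : V → V := fun v =>
      if h : ∃ b, b ∈ B ∧ ∃ d, ReachIn G (R \ B) v d ∧ G.Adj d b then choose h else y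
      with hattdef
    have hatt1 : ∀ v, v ∈ R → v ∉ B →
        att v ∈ B ∧ ∃ d, ReachIn G (R \ B) v d ∧ G.Adj d (att v) := by
      intro v hv hvB
      have h := hattx v hv hvB
      rw [hattdef]
      simp only [dif_pos h]
      exact choose_spec h
    have hatt_unique : ∀ v, v ∈ R → v ∉ B → ∀ b d, b ∈ B →
        ReachIn G (R \ B) v d → G.Adj d b → att v = b := by
      intro v hv hvB b d hb hr hadjdb
      obtain ⟨hattB, d₀, hr₀, hadj₀⟩ := hatt1 v hv hvB
      exact attach_unique hBblk (fun x hx => hx.2) (hr₀.symm.trans hr) hadj₀ hadjdb hattB hb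
    -- projection
    set π : V → ↥B := fun v =>
      if h : v ∈ B then ⟨v, h⟩
      else if h' : v ∈ R then ⟨att v, (hatt1 v h' h).1⟩ else yhat
      with hπdef
    have hπB : ∀ v (h : v ∈ B), π v = ⟨v, h⟩ := by
      intro v h; rw [hπdef]; simp only [dif_pos h]
    have hπR : ∀ v (h' : v ∈ R) (h : v ∉ B), π v = ⟨att v, (hatt1 v h' h).1⟩ := by
      intro v h' h; rw [hπdef]; simp only [dif_neg h, dif_pos h']
    have hπout : ∀ v, v ∉ R → π v = yhat := by
      intro v h'
      have hvB : v ∉ B := fun hvB => h' (hBR hvB)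
      rw [hπdef]; simp only [dif_neg hvB, dif_neg h']
    have hπy : π y = yhat := by rw [hπB y hyB]
    have hyne : ∀ v ∈ R, v ∉ B → v ≠ y := fun v _ hvB hvy => hvB (hvy ▸ hyB)
    -- the projection maps Steps to Steps
    have hπstep : ∀ a b, Step G a b → Step H (π a) (π b) := by
      intro a b hab
      rcases hab with rfl | hab
      · exact Or.inl rfl
      by_cases haB : a ∈ B <;> by_cases hbB : b ∈ B
      · right
        rw [hπB a haB, hπB b hbB]
        exact hab
      · by_cases hbR : b ∈ R
        · left
          rw [hπB a haB, hπR b hbR hbB]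
          have : att b = a := hatt_unique b hbR hbB a b haB
            (ReachIn.refl (S := R \ B) ⟨hbR, hbB⟩) hab.symm
          exact Subtype.ext this.symm
        · left
          have haR : a ∈ R := hBR haB
          have hay : a = y := by
            by_contra hay
            exact hbR (hterr a haR hay b hab)
          rw [hπout b hbR, hπB a haB]
          exact Subtype.ext hay
      · by_cases haR : a ∈ R
        · left
          rw [hπB b hbB, hπR a haR haB]
          have : att a = b := hatt_unique a haR haB b a hbB
            (ReachIn.refl (S := R \ B) ⟨haR, haB⟩) hab
          exact Subtype.ext this
        · left
          have hbR : b ∈ R := hBR hbB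
          have hby : b = y := by
            by_contra hby
            exact haR (hterr b hbR hby a hab.symm)
          rw [hπout a haR, hπB b hbB]
          exact Subtype.ext hby.symm
      · by_cases haR : a ∈ R <;> by_cases hbR : b ∈ R
        · left
          obtain ⟨hattBb, db, hrb, hadjb⟩ := hatt1 b hbR hbB
          have : att a = att b := hatt_unique a haR haB (att b) db hattBb
            ((ReachIn.adj (S := R \ B) ⟨haR, haB⟩ ⟨hbR, hbB⟩ hab).trans hrb) hadjb
          rw [hπR a haR haB, hπR b hbR hbB]
          exact Subtype.ext this
        · exact absurd (hterr a haR (hyne a haR haB) b hab) hbR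
        · exact absurd (hterr b hbR (hyne b hbR hbB) a hab.symm) haR
        · left
          rw [hπout a haR, hπout b hbR]
    -- winning set membership of the sub-state
    have hwin : WinSt H X' (fun _ => yhat, π r₀) := by
      by_contra hnwin
      have hexitlaw := escape_law H X' (fun _ => yhat, π r₀) hnwin
      have hECW : ExitCopWin H 2 X' := by
        have := hblk B hBblk yhat yhat
        rwa [Set.pair_eq_singleton] at this
      obtain ⟨σ', hinit, hwins⟩ := hECW (fun _ => yhat)
        (by rw [hX'def, Set.singleton_subset_iff]; exact ⟨0, rfl⟩)
      set τ' : RobberStrategy H 2 :=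
        ⟨fun _ => π r₀, (escapeLaw H X').f, (escapeLaw H X').valid⟩ with hτ'def
      have hWP := winPlay_of_strategy (X := X') σ' τ' (hwins τ')
      apply hexitlaw (fun n => (play σ' τ' n).1) hinit (play_okCops σ' τ')
      have hrseq : (fun n => (play σ' τ' n).2) =
          robSeq (escapeLaw H X') (fun k => (play σ' τ' k).1) (π r₀) := by
        funext n
        have := play_snd_eq_robSeq σ' τ' n
        exact this
      rw [← hrseq]
      exact hWP
    -- the simulation sequence
    set Q : ℕ → (Fin 2 → ↥B) × V := fun n => Nat.rec ((fun _ => yhat), r₀)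
      (fun _ q => ((greedy H X' (q.1, π q.2)),
        g.f (fun i => ((greedy H X' (q.1, π q.2)) i : V)) q.2)) n with hQdef
    set subc : ℕ → Fin 2 → ↥B := fun n => (Q n).1 with hsubcdef
    set rs : ℕ → V := fun n => (Q n).2 with hrsdef
    set cs : ℕ → Fin 2 → V := fun n i => ((subc n i : V)) with hcsdef
    have hsubcS : ∀ n, subc (n+1) = greedy H X' (subc n, π (rs n)) := fun n => rfl
    have hrsS : ∀ n, rs (n+1) = g.f (cs (n+1)) (rs n) := fun n => rfl
    have hrs0 : rs 0 = r₀ := rfl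
    have hcs0 : cs 0 = fun _ => y := rfl
    have hrs_robSeq : robSeq g cs r₀ = rs := by
      funext n
      induction n with
      | zero => rfl
      | succ n ihn =>
        show g.f (cs (n+1)) (robSeq g cs r₀ n) = rs (n+1)
        rw [ihn, hrsS]
    have hOK : OKCops G cs := by
      intro n i
      have := greedy_valid H X' (subc n, π (rs n)) i
      rw [← hsubcS n] at this
      exact stepH_of_step this
    have hrsStep : ∀ n, Step G (rs n) (rs (n+1)) := by
      intro n
      rw [hrsS n]
      exact g.valid _ _
    -- run the sub-game
    obtain ⟨nstar, hcaught', hsafe'⟩ :=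
      greedy_wins H X' (rank H X' (fun _ => yhat, π r₀)) (fun _ => yhat, π r₀) hwin le_rfl
        subc (fun n => π (rs n)) rfl rfl
        (fun n => hsubcS n) (fun n => hπstep _ _ (hrsStep n))
    simp only [CaughtS] at hcaught'
    -- whenever the robber stands on y within the window, a cop lands on him
    have hcopy : ∀ m, m ≤ nstar → rs m = y → ∃ i, cs (m+1) i = rs m := by
      intro m hm hmy
      have hmem : π (rs m) ∈ X' := by
        rw [hmy, hπy]
        exact Set.mem_singleton _
      have hval : ((π (rs m)) : V) = rs m := by rw [hmy, hπy]
      by_contra hno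
      push_neg at hno
      exact hsafe' m hm ⟨hmem, fun i hi => hno i ((congrArg Subtype.val hi).trans hval)⟩
    have hsafeReal : ∀ m, m ≤ nstar → rs m ∈ R → ¬ EscS X cs rs m := by
      intro m hm hmR hEsc
      obtain ⟨hmX, hmiss⟩ := hEsc
      have hmy : rs m = y := hXR ⟨hmX, hmR⟩
      obtain ⟨i, hi⟩ := hcopy m hm hmy
      exact hmiss i hi
    by_cases hexit : ∃ m, m ≤ nstar ∧ rs m ∉ R
    · -- the robber tried to leave the region through y; he is caught there
      have hex2 : ∃ m, rs m ∉ R := ⟨hexit.choose, hexit.choose_spec.2⟩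
      have hm₀ : rs (Nat.find hex2) ∉ R := Nat.find_spec hex2
      have hm₀le : Nat.find hex2 ≤ nstar :=
        le_trans (Nat.find_min' hex2 hexit.choose_spec.2) hexit.choose_spec.1
      have hm₀pos : Nat.find hex2 ≠ 0 := by
        intro h
        rw [h] at hm₀
        exact hm₀ (hrs0 ▸ hr₀)
      obtain ⟨th, hth⟩ : ∃ t, Nat.find hex2 = t + 1 := ⟨Nat.find hex2 - 1, by omega⟩
      rw [hth] at hm₀ hm₀le
      have hprev : rs th ∈ R := by
        by_contra h
        exact Nat.find_min hex2 (by omega) h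
      have hτy : rs th = y := by
        rcases hrsStep th with he | ha
        · rw [← he] at hm₀
          exact absurd hprev hm₀
        · by_contra hne
          exact hm₀ (hterr _ hprev hne _ ha)
      obtain ⟨i, hi⟩ := hcopy th (by omega) hτy
      refine ⟨cs, hcs0, hOK, ?_⟩
      rw [hrs_robSeq]
      refine ⟨th, ⟨i, Or.inr hi⟩, ?_⟩
      intro m hm
      refine hsafeReal m (by omega) ?_
      by_contra h
      exact Nat.find_min hex2 (by omega) h
    · push_neg at hexit
      have hinR : ∀ m, m ≤ nstar → rs m ∈ R := hexit
      by_cases hBmem : rs nstar ∈ B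
      · -- real capture inside the block
        refine ⟨cs, hcs0, hOK, ?_⟩
        rw [hrs_robSeq]
        refine ⟨nstar, ?_, fun m hm => hsafeReal m hm (hinR m hm)⟩
        obtain ⟨i, hi⟩ := hcaught'
        have hπn : π (rs nstar) = ⟨rs nstar, hBmem⟩ := hπB _ hBmem
        refine ⟨i, ?_⟩
        rcases hi with hi | hi
        · left
          have := congrArg Subtype.val hi
          rwa [hπn] at this
        · right
          have := congrArg Subtype.val hi
          rwa [hπn] at this
      · -- confinement behind the attachment vertex
        have hrsnR : rs nstar ∈ R := hinR nstar le_rfl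
        obtain ⟨hattB, d₀, hrd₀, hadj₀⟩ := hatt1 (rs nstar) hrsnR hBmem
        set u : V := att (rs nstar) with hudef
        set D : Set V := {w | ReachIn G (R \ B) (rs nstar) w} with hDdef
        have hDsub : D ⊆ R \ B := fun w hw => ReachIn.mem_right hw
        have hrsD : rs nstar ∈ D := ReachIn.refl ⟨hrsnR, hBmem⟩
        have huB : u ∈ B := hattB
        have huR : u ∈ R := hBR huB
        have hDnb : ∀ a ∈ D, ∀ b, G.Adj a b → b ∈ D ∪ {u} := by
          intro a haD b hadj
          have haRB : a ∈ R \ B := hDsub haD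
          have hbR : b ∈ R := hterr a haRB.1 (hyne a haRB.1 haRB.2) b hadj
          by_cases hbB : b ∈ B
          · right
            have hub' : u = b := by
              rw [hudef]
              exact hatt_unique (rs nstar) hrsnR hBmem b a hbB haD hadj
            exact Set.mem_singleton_iff.mpr hub'.symm
          · left
            exact ReachIn.trans haD (ReachIn.adj haRB ⟨hbR, hbB⟩ hadj)
        have hterrD : ∀ a ∈ D ∪ {u}, a ≠ u → ∀ b, G.Adj a b → b ∈ D ∪ {u} := by
          rintro a (haD | hau) hane b hadj
          · exact hDnb a haD b hadj
          · exact absurd (Set.mem_singleton_iff.mp hau) hane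
        have hXD : X ∩ (D ∪ {u}) ⊆ {u} := by
          rintro x ⟨hxX, hxD | hxu⟩
          · exfalso
            have hx : x ∈ R \ B := hDsub hxD
            have hxy : x = y := hXR ⟨hxX, hx.1⟩
            exact hx.2 (hxy ▸ hyB)
          · exact hxu
        have hDreach : ∀ a ∈ D, ReachIn G D (rs nstar) a := by
          intro a haD
          obtain ⟨q, hq⟩ := haD
          refine ⟨q, ?_⟩
          intro x hx
          exact (reachIn_support_start q x hx).mono (fun z hz => hq z hz)
        have hDconn : ConnIn G (D ∪ {u}) := by
          have key : ∀ c ∈ D ∪ {u}, ReachIn G (D ∪ {u}) (rs nstar) c := by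
            rintro c (hcD | hcu)
            · exact (hDreach c hcD).mono Set.subset_union_left
            · rw [Set.mem_singleton_iff] at hcu
              subst hcu
              refine ReachIn.trans ((hDreach d₀ hrd₀).mono Set.subset_union_left) ?_
              refine ReachIn.adj (Or.inl hrd₀) (Or.inr rfl) ?_
              rw [hudef]
              exact hadj₀
          exact fun a ha b hb => (key a ha).symm.trans (key b hb)
        have hDuR : D ∪ {u} ⊆ R := by
          rintro x (h | h)
          · exact (hDsub h).1
          · exact (Set.mem_singleton_iff.mp h) ▸ huR
        have hbcD : ∀ S, IsBlock G S → 2 ≤ (S ∩ (D ∪ {u})).ncard → S ⊆ D ∪ {u} := by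
          intro S hS hcard2
          have hSR : S ⊆ R := by
            apply hbc S hS
            refine le_trans hcard2 (Set.ncard_le_ncard ?_ (Set.toFinite _))
            exact fun x hx => ⟨hx.1, hDuR hx.2⟩
          obtain ⟨d, hdmem, hdne⟩ :=
            Set.exists_ne_of_one_lt_ncard (s := S ∩ (D ∪ {u})) (by omega) u
          have hdS : d ∈ S := hdmem.1
          have hdD : d ∈ D := by
            rcases hdmem.2 with h | h
            · exact h
            · exact absurd (Set.mem_singleton_iff.mp h) hdne
          intro s hsS
          by_contra hsnot
          have hsne : s ≠ u := fun h => hsnot (Or.inr (h ▸ rfl))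
          have hsD : s ∉ D := fun h => hsnot (Or.inl h)
          obtain ⟨q, hq⟩ := biconn_del_conn hS.2.1 hS.1 u d ⟨hdS, by simpa using hdne⟩
            s ⟨hsS, by simpa using hsne⟩
          exact hsD (reach_closed hDnb q (fun x hx => by simpa using (hq x hx).2) hdD)
        have hDltR : (D ∪ {u}).ncard < R.ncard := by
          have hBcard := hBblk.1
          obtain ⟨b', hb'B, hb'ne⟩ :=
            Set.exists_ne_of_one_lt_ncard (s := B) (by omega) u
          refine Set.ncard_lt_ncard ((Set.ssubset_iff_of_subset hDuR).mpr
            ⟨b', hBR hb'B, ?_⟩) (Set.toFinite R)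
          rintro (h | h)
          · exact (hDsub h).2 hb'B
          · exact hb'ne (Set.mem_singleton_iff.mp h)
        have hIH : ∀ r' ∈ D ∪ {u}, Chase X g (fun _ => u) r' :=
          fun r' hr' => ih (D ∪ {u}) u (by omega) (Or.inr rfl) hDconn hterrD hXD hbcD r' hr'
        obtain ⟨i, hcap⟩ := hcaught'
        have hπn : π (rs nstar) = ⟨u, huB⟩ := by
          rw [hπR (rs nstar) hrsnR hBmem]
        have hmarch : ∀ (t : ℕ), cs t i = u → rs t ∈ D ∪ {u} →
            Chase X g (cs t) (rs t) := by
          intro t hcui hrtD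
          refine chase_march i u (D ∪ {u}) hterrD hXD
            ((hGc.preconnected (cs t (oth i)) u).some) (cs t) hcui rfl (rs t) hrtD ?_
          intro r' hr'
          rw [two_const]
          exact hIH r' hr'
        rcases hcap with hcap | hcap
        · -- a cop reaches the attachment at time nstar
          have hcui : cs nstar i = u := by
            have := congrArg Subtype.val hcap
            rwa [hπn] at this
          have hpre := chase_prefix nstar cs r₀ hOK
            (fun m hm hX => by
              rw [hrs_robSeq] at hX ⊢
              exact hcopy m (by omega) (hXR ⟨hX, hinR m (by omega)⟩))
            (by
              rw [hrs_robSeq]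
              exact hmarch nstar hcui (Or.inl hrsD))
          rw [hcs0] at hpre
          exact hpre
        · -- a cop reaches the attachment at time nstar+1
          have hcui : cs (nstar+1) i = u := by
            have := congrArg Subtype.val hcap
            rwa [hπn] at this
          have hrt : rs (nstar+1) ∈ D ∪ {u} := by
            rcases hrsStep nstar with he | ha
            · rw [← he]
              exact Or.inl hrsD
            · exact hDnb (rs nstar) hrsD _ ha
          have hpre := chase_prefix (nstar+1) cs r₀ hOK
            (fun m hm hX => by
              rw [hrs_robSeq] at hX ⊢
              exact hcopy m (by omega) (hXR ⟨hX, hinR m (by omega)⟩))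
            (by
              rw [hrs_robSeq]
              exact hmarch (nstar+1) hcui hrt)
          rw [hcs0] at hpre
          exact hpre

end pursuit

end
end BP


/-- Block decomposition: if every block of a finite connected graph `G` is
`{a, b}`-exit 2-copwin for every pair of its vertices, then `G` is `{x}`-exit
2-copwin for every vertex `x`. -/
theorem exit_copwin_of_blocks [Fintype V] (G : SimpleGraph V) (hc : G.Connected)
    (hblk : ∀ B : Set V, IsBlock G B → ∀ a b : B, ExitCopWin (G.induce B) 2 {a, b}) :
    ∀ x : V, ExitCopWin G 2 {x} := by
  classical
  intro x c₀ hc₀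
  -- every initial state is in the cops' winning set
  have hwin : ∀ r₀ : V, BP.WinSt G {x} (c₀, r₀) := by
    intro r₀
    by_contra hnw
    have hesc := BP.escape_law G {x} (c₀, r₀) hnw
    set g := BP.escapeLaw G {x} with hg
    obtain ⟨i0, hi0⟩ : ∃ i, c₀ i = x := hc₀ (Set.mem_singleton x)
    have hmain : ∀ r' : V, BP.Chase {x} g (fun _ => x) r' := by
      intro r'
      exact BP.pursuit hc hblk {x} g (Set.univ : Set V).ncard Set.univ x le_rfl
        trivial (BP.connIn_univ_of_connected hc) (fun _ _ _ _ _ => trivial)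
        (fun z hz => hz.1) (fun S _ _ => Set.subset_univ S) r' trivial
    have hchase : BP.Chase {x} g c₀ r₀ := by
      refine BP.chase_march i0 x Set.univ (fun _ _ _ _ _ => trivial)
        (fun z hz => hz.1) ((hc.preconnected (c₀ (BP.oth i0)) x).some) c₀ hi0 rfl
        r₀ trivial ?_
      intro r' _
      rw [BP.two_const]
      exact hmain r'
    obtain ⟨cs, hcs0, hOK, hWP⟩ := hchase
    exact hesc cs hcs0 hOK hWP
  refine ⟨⟨c₀, fun c r => BP.greedy G {x} (c, r),
    fun c r i => BP.greedy_valid G {x} (c, r) i⟩, rfl, ?_⟩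
  intro τ
  set σ : CopStrategy G 2 := ⟨c₀, fun c r => BP.greedy G {x} (c, r),
    fun c r i => BP.greedy_valid G {x} (c, r) i⟩ with hσ
  have hrun := BP.greedy_wins G {x} (BP.rank G {x} (c₀, τ.init c₀)) (c₀, τ.init c₀)
    (hwin (τ.init c₀)) le_rfl
    (fun n => (play σ τ n).1) (fun n => (play σ τ n).2) rfl rfl
    (fun n => rfl) (fun n => τ.valid _ _)
  exact hrun
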